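/- arXiv:1808.04417 — 4 statements merged into one kernel-verified Lean document; each statement's English description precedes it below -/
import Mathlib

section
/- On every full strip (a maximal connected collinear set of pixels) of a grid graph, any cycle cover makes an even number of turns, where a U-turn counts as two turns. -/
/-- A pixel is a point of the integer lattice. -/
abbrev Pixel : Type := ℤ × ℤ

/-- A unit step in one of the four axis directions. -/
def IsUnitStep (d : Pixel) : Prop := d = (1, 0) ∨ d = (-1, 0) ∨ d = (0, 1) ∨ d = (0, -1)

/-- A closed walk with `n+1` edge traversals in the integer grid: a cyclic sequence of
vertices, consecutive ones at distance 1. -/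
structure GridWalk (n : ℕ) where
  v : ZMod (n + 1) → Pixel
  step : ∀ i, IsUnitStep (v (i + 1) - v i)

namespace GridWalk

variable {n : ℕ}

/-- Direction of the `i`-th step. -/
def dir (w : GridWalk n) (i : ZMod (n + 1)) : Pixel := w.v (i + 1) - w.v i

/-- Turn cost at a vertex visit with incoming direction `din` and outgoing direction `dout`:
going straight costs 0, a 90° turn costs 1, a U-turn costs 2. -/
def turnCost (din dout : Pixel) : ℕ :=
  if dout = din then 0 else if dout = -din then 2 else 1

/-- Turn cost at the `i`-th vertex visit. -/
def turnAt (w : GridWalk n) (i : ZMod (n + 1)) : ℕ := turnCost (w.dir (i - 1)) (w.dir i)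

/-- Total number of turns of the walk (U-turns counting twice). -/
def turns (w : GridWalk n) : ℕ := ∑ i, w.turnAt i

/-- Number of turns the walk makes at pixels of the set `S` (U-turns counting twice). -/
noncomputable def turnsIn (w : GridWalk n) (S : Set Pixel) : ℕ :=
  ∑ i, S.indicator (fun _ => w.turnAt i) (w.v i)

end GridWalk

/-- A cycle cover of the grid graph with pixel set `P`: a finite collection of closed walks
inside `P` that together visit every pixel of `P`. -/
structure CycleCover (P : Set Pixel) where
  k : ℕ
  len : Fin k → ℕ
  walk : (j : Fin k) → GridWalk (len j)
  mem : ∀ j i, (walk j).v i ∈ P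
  covers : ∀ p ∈ P, ∃ j i, (walk j).v i = p

namespace CycleCover

variable {P : Set Pixel}

/-- Number of turns the cycle cover makes at pixels of the set `S`. -/
noncomputable def turnsIn (C : CycleCover P) (S : Set Pixel) : ℕ :=
  ∑ j, (C.walk j).turnsIn S

/-- Total number of turns of the cycle cover. -/
def totalTurns (C : CycleCover P) : ℕ := ∑ j, (C.walk j).turns

end CycleCover

/-- The horizontal full strip of the grid graph `P` through the pixel `p`: all pixels in the
same row as `p` that are connected to `p` within `P` along that row. -/
def hStrip (P : Set Pixel) (p : Pixel) : Set Pixel :=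
  {q | q.2 = p.2 ∧ ∀ x : ℤ, min p.1 q.1 ≤ x → x ≤ max p.1 q.1 → ((x, p.2) : Pixel) ∈ P}

/-- The vertical full strip of the grid graph `P` through the pixel `p`. -/
def vStrip (P : Set Pixel) (p : Pixel) : Set Pixel :=
  {q | q.1 = p.1 ∧ ∀ y : ℤ, min p.2 q.2 ≤ y → y ≤ max p.2 q.2 → ((p.1, y) : Pixel) ∈ P}

/-- A full strip of the grid graph `P`: a maximal connected collinear set of pixels. -/
def IsFullStrip (P : Set Pixel) (S : Set Pixel) : Prop :=
  ∃ p ∈ P, S = hStrip P p ∨ S = vStrip P p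

/-!
The parity of a turn records whether the walk switches between horizontal and vertical
movement. Horizontal steps can neither enter nor leave a horizontal strip, so modulo 2 every
turn in the strip is charged to the horizontal steps leaving a pixel of the strip and to those
arriving at one; these are the same steps, so each is counted twice. Vertical strips are
symmetric.
-/

section Strips

variable {P : Set Pixel} {p q q' : Pixel}

lemma mem_hStrip_of_mem_of_near (hq : q ∈ hStrip P p) (hq' : q' ∈ P) (hrow : q'.2 = q.2)
    (h₁ : q'.1 ≤ q.1 + 1) (h₂ : q.1 ≤ q'.1 + 1) : q' ∈ hStrip P p := by
  obtain ⟨hqrow, hseg⟩ := hq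
  refine ⟨hrow.trans hqrow, fun x hx₁ hx₂ => ?_⟩
  by_cases hx : min p.1 q.1 ≤ x ∧ x ≤ max p.1 q.1
  · exact hseg x hx.1 hx.2
  · obtain rfl : x = q'.1 := by omega
    rwa [← hqrow, ← hrow]

lemma mem_vStrip_of_mem_of_near (hq : q ∈ vStrip P p) (hq' : q' ∈ P) (hcol : q'.1 = q.1)
    (h₁ : q'.2 ≤ q.2 + 1) (h₂ : q.2 ≤ q'.2 + 1) : q' ∈ vStrip P p := by
  obtain ⟨hqcol, hseg⟩ := hq
  refine ⟨hcol.trans hqcol, fun y hy₁ hy₂ => ?_⟩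
  by_cases hy : min p.2 q.2 ≤ y ∧ y ≤ max p.2 q.2
  · exact hseg y hy.1 hy.2
  · obtain rfl : y = q'.2 := by omega
    rwa [← hqcol, ← hcol]

lemma mem_hStrip_iff_of_step (hq : q ∈ P) (hq' : q' ∈ P) (hstep : IsUnitStep (q' - q))
    (hhor : (q' - q).2 = 0) : q ∈ hStrip P p ↔ q' ∈ hStrip P p := by
  have hrow : q'.2 = q.2 := by simp only [Prod.snd_sub] at hhor; omega
  have hnear : q'.1 ≤ q.1 + 1 ∧ q.1 ≤ q'.1 + 1 := by
    rcases hstep with h | h | h | h <;> simp only [Prod.ext_iff, Prod.fst_sub] at h <;> omega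
  exact ⟨fun h => mem_hStrip_of_mem_of_near h hq' hrow hnear.1 hnear.2,
    fun h => mem_hStrip_of_mem_of_near h hq hrow.symm hnear.2 hnear.1⟩

lemma mem_vStrip_iff_of_step (hq : q ∈ P) (hq' : q' ∈ P) (hstep : IsUnitStep (q' - q))
    (hver : (q' - q).1 = 0) : q ∈ vStrip P p ↔ q' ∈ vStrip P p := by
  have hcol : q'.1 = q.1 := by simp only [Prod.fst_sub] at hver; omega
  have hnear : q'.2 ≤ q.2 + 1 ∧ q.2 ≤ q'.2 + 1 := by
    rcases hstep with h | h | h | h <;> simp only [Prod.ext_iff, Prod.snd_sub] at h <;> omega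
  exact ⟨fun h => mem_vStrip_of_mem_of_near h hq' hcol hnear.1 hnear.2,
    fun h => mem_vStrip_of_mem_of_near h hq hcol.symm hnear.2 hnear.1⟩

end Strips

namespace GridWalk

lemma turnCost_natCast_zmod_two_snd {d₁ d₂ : Pixel} (h₁ : IsUnitStep d₁) (h₂ : IsUnitStep d₂) :
    (turnCost d₁ d₂ : ZMod 2) = (if d₁.2 = 0 then 1 else 0) + (if d₂.2 = 0 then 1 else 0) := by
  rcases h₁ with rfl | rfl | rfl | rfl <;> rcases h₂ with rfl | rfl | rfl | rfl <;> decide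

lemma turnCost_natCast_zmod_two_fst {d₁ d₂ : Pixel} (h₁ : IsUnitStep d₁) (h₂ : IsUnitStep d₂) :
    (turnCost d₁ d₂ : ZMod 2) = (if d₁.1 = 0 then 1 else 0) + (if d₂.1 = 0 then 1 else 0) := by
  rcases h₁ with rfl | rfl | rfl | rfl <;> rcases h₂ with rfl | rfl | rfl | rfl <;> decide

variable {n : ℕ} {P : Set Pixel}

theorem even_turnsIn_of_turnAt_parity {w : GridWalk n} {S : Set Pixel} (A : Pixel → Prop)
    [DecidablePred A]
    (hturn : ∀ i, (w.turnAt i : ZMod 2) =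
      (if A (w.dir (i - 1)) then 1 else 0) + (if A (w.dir i) then 1 else 0))
    (hS : ∀ i, A (w.dir i) → (w.v i ∈ S ↔ w.v (i + 1) ∈ S)) :
    Even (w.turnsIn S) := by
  classical
  set b : ZMod (n + 1) → ZMod 2 := fun i => if A (w.dir i) ∧ w.v i ∈ S then 1 else 0
  have hprev : ∀ i, b (i - 1) = if A (w.dir (i - 1)) ∧ w.v i ∈ S then 1 else 0 := by
    intro i
    have hmem := hS (i - 1)
    rw [sub_add_cancel] at hmem
    by_cases hA : A (w.dir (i - 1)) <;> simp [b, hA, hmem]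
  have hlocal : ∀ i, ((S.indicator (fun _ => w.turnAt i) (w.v i) : ℕ) : ZMod 2) =
      b (i - 1) + b i := by
    intro i
    by_cases hv : w.v i ∈ S <;> simp [hprev, b, hv, hturn]
  rw [← ZMod.natCast_eq_zero_iff_even]
  calc ((w.turnsIn S : ℕ) : ZMod 2) = ∑ i, (b (i - 1) + b i) := by
        simp only [turnsIn, Nat.cast_sum, hlocal]
    _ = ∑ i, b i + ∑ i, b i := by
        rw [Finset.sum_add_distrib,
          Fintype.sum_equiv (Equiv.subRight 1) (fun i => b (i - 1)) b fun _ => rfl]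
    _ = 0 := CharTwo.add_self_eq_zero _

theorem even_turnsIn_hStrip (w : GridWalk n) (hw : ∀ i, w.v i ∈ P) (p : Pixel) :
    Even (w.turnsIn (hStrip P p)) :=
  even_turnsIn_of_turnAt_parity (fun d => d.2 = 0)
    (fun _ => turnCost_natCast_zmod_two_snd (w.step _) (w.step _))
    (fun i => mem_hStrip_iff_of_step (hw i) (hw (i + 1)) (w.step i))

theorem even_turnsIn_vStrip (w : GridWalk n) (hw : ∀ i, w.v i ∈ P) (p : Pixel) :
    Even (w.turnsIn (vStrip P p)) :=
  even_turnsIn_of_turnAt_parity (fun d => d.1 = 0)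
    (fun _ => turnCost_natCast_zmod_two_fst (w.step _) (w.step _))
    (fun i => mem_vStrip_iff_of_step (hw i) (hw (i + 1)) (w.step i))

end GridWalk

/-- On every full strip of a grid graph, any cycle cover makes an even number
of turns (U-turns counting as two). -/
theorem strip_turns_even (P S : Set Pixel) (hS : IsFullStrip P S) (C : CycleCover P) :
    Even (C.turnsIn S) := by
  obtain ⟨p, -, rfl | rfl⟩ := hS
  · exact Finset.even_sum _ fun j _ => (C.walk j).even_turnsIn_hStrip (C.mem j) p
  · exact Finset.even_sum _ fun j _ => (C.walk j).even_turnsIn_vStrip (C.mem j) p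
end

section
/- Let p be a pixel of a grid graph and C a cycle cover. If no walk of C makes a turn at p, then either there is a turn at some pixel strictly to the left of p and a turn at some pixel strictly to the right of p on the horizontal full strip through p, or there is a turn at some pixel strictly above p and a turn at some pixel strictly below p on the vertical full strip through p. -/
theorem IsUnitStep.ne_zero {d : Pixel} (h : IsUnitStep d) : d ≠ 0 := by
  rcases h with rfl | rfl | rfl | rfl <;> simp

theorem IsUnitStep.neg {d : Pixel} (h : IsUnitStep d) : IsUnitStep (-d) := by
  rcases h with rfl | rfl | rfl | rfl <;> simp [IsUnitStep]

namespace GridWalk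

variable {n : ℕ} (w : GridWalk n)

theorem turnCost_eq_zero_iff {din dout : Pixel} : turnCost din dout = 0 ↔ dout = din := by
  unfold turnCost
  split_ifs <;> simp_all

theorem turnCost_neg_neg (din dout : Pixel) : turnCost (-dout) (-din) = turnCost din dout := by
  simp only [turnCost, neg_inj, neg_neg, eq_comm (a := -din)]

theorem turnAt_eq_zero_iff {i : ZMod (n + 1)} : w.turnAt i = 0 ↔ w.dir i = w.dir (i - 1) :=
  turnCost_eq_zero_iff

theorem sum_dir_eq_zero : ∑ i, w.dir i = 0 := by
  simp only [dir, Finset.sum_sub_distrib, sub_eq_zero]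
  exact Equiv.sum_comp (Equiv.addRight 1) w.v

theorem exists_dir_ne (d : Pixel) : ∃ i, w.dir i ≠ d := by
  by_contra! h
  have hd : IsUnitStep d := h 0 ▸ w.step 0
  have hsum := w.sum_dir_eq_zero
  simp only [h, Finset.sum_const, Finset.card_univ, ZMod.card] at hsum
  exact hd.ne_zero ((smul_eq_zero.mp hsum).resolve_left n.succ_ne_zero)

def reverse : GridWalk n where
  v i := w.v (-i)
  step i := by
    have h := (w.step (-i - 1)).neg
    rwa [neg_sub, sub_add_cancel, ← neg_add'] at h

theorem reverse_dir (i : ZMod (n + 1)) : w.reverse.dir i = -w.dir (-i - 1) := by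
  simp only [dir, reverse]
  rw [neg_sub, sub_add_cancel, neg_add']

theorem turnAt_reverse (i : ZMod (n + 1)) : w.reverse.turnAt i = w.turnAt (-i) := by
  simp only [turnAt, reverse_dir, turnCost_neg_neg]
  congr 2
  ring

theorem exists_turn_ahead (i : ZMod (n + 1)) :
    ∃ t : ℤ, 0 < t ∧ (∀ s ∈ Set.Ico 0 t, w.dir (i + s) = w.dir i) ∧ w.turnAt (i + t) ≠ 0 := by
  obtain ⟨j, hj⟩ := w.exists_dir_ne (w.dir i)
  have hex : ∃ t : ℕ, w.dir (i + t) ≠ w.dir i := ⟨(j - i).val, by simpa using hj⟩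
  obtain ⟨t, ht⟩ : ∃ t, Nat.find hex = t + 1 :=
    Nat.exists_eq_add_one_of_ne_zero fun h0 => Nat.find_spec hex (by simp [h0])
  have hmin : ∀ s ≤ t, w.dir (i + s) = w.dir i := fun s hs =>
    not_not.mp (Nat.find_min hex (by omega))
  have hturn : w.dir (i + (t + 1 : ℕ)) ≠ w.dir i := ht ▸ Nat.find_spec hex
  refine ⟨t + 1, by omega, fun s ⟨hs0, hst⟩ => ?_, ?_⟩
  · lift s to ℕ using hs0
    exact_mod_cast hmin s (by omega)
  · rw [Ne, turnAt_eq_zero_iff]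
    push_cast
    rw [← add_assoc, add_sub_cancel_right, hmin t le_rfl]
    simpa [add_assoc] using hturn

theorem exists_turns_around {i : ZMod (n + 1)} (hi : w.turnAt i = 0) :
    ∃ a b : ℤ, a < 0 ∧ 0 < b ∧ (∀ s ∈ Set.Ico a b, w.dir (i + s) = w.dir i) ∧
      w.turnAt (i + a) ≠ 0 ∧ w.turnAt (i + b) ≠ 0 := by
  obtain ⟨b, hb, hrun_b, htb⟩ := w.exists_turn_ahead i
  obtain ⟨c, hc, hrun_c, htc⟩ := w.reverse.exists_turn_ahead (-i)
  refine ⟨-c, b, by omega, hb, fun s ⟨hcs, hsb⟩ => ?_, ?_, htb⟩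
  · rcases lt_or_ge s 0 with hs | hs
    · have := hrun_c (-s - 1) ⟨by omega, by omega⟩
      rw [reverse_dir, reverse_dir, neg_inj] at this
      rw [(turnAt_eq_zero_iff w).1 hi]
      convert this using 2 <;> push_cast <;> ring
    · exact hrun_b s ⟨hs, hsb⟩
  · rwa [turnAt_reverse, neg_add, neg_neg, ← Int.cast_neg] at htc

theorem v_eq_of_dir_eq {i : ZMod (n + 1)} {d : Pixel} {a b : ℤ}
    (h : ∀ s ∈ Set.Ico a b, w.dir (i + s) = d) {s : ℤ} (hs : s ∈ Set.Icc a b) :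
    w.v (i + s) = w.v (i + a) + (s - a) • d := by
  obtain ⟨has, hsb⟩ := hs
  induction s, has using Int.leInduction with
  | base => simp
  | succ s has ih =>
    have hstep : w.v (i + (s + 1 : ℤ)) = w.v (i + s) + w.dir (i + s) := by
      rw [dir]; push_cast; rw [add_assoc]; abel
    rw [hstep, ih (by omega), h s ⟨has, by omega⟩, add_assoc, ← add_one_zsmul]
    ring_nf

end GridWalk

namespace CycleCover

variable {P : Set Pixel} (C : CycleCover P)

theorem turnsIn_singleton_eq_zero_iff {q : Pixel} :
    C.turnsIn {q} = 0 ↔ ∀ j i, (C.walk j).v i = q → (C.walk j).turnAt i = 0 := by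
  simp [turnsIn, GridWalk.turnsIn, Finset.sum_eq_zero_iff, Set.indicator]

def TurnsAround (p d : Pixel) : Prop :=
  ∃ a b : ℤ, a < 0 ∧ 0 < b ∧ (∀ s ∈ Set.Icc a b, p + s • d ∈ P) ∧
    0 < C.turnsIn {p + a • d} ∧ 0 < C.turnsIn {p + b • d}

theorem exists_turnsAround {p : Pixel} (hp : p ∈ P) (h : C.turnsIn {p} = 0) :
    ∃ d, IsUnitStep d ∧ C.TurnsAround p d := by
  obtain ⟨j, i, rfl⟩ := C.covers _ hp
  set w := C.walk j
  have hi : w.turnAt i = 0 := (C.turnsIn_singleton_eq_zero_iff.mp h) j i rfl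
  obtain ⟨a, b, ha, hb, hrun, hta, htb⟩ := w.exists_turns_around hi
  have hv : ∀ s ∈ Set.Icc a b, w.v (i + s) = w.v i + s • w.dir i := fun s hs => by
    have h0 := w.v_eq_of_dir_eq hrun (s := 0) ⟨ha.le, hb.le⟩
    rw [Int.cast_zero, add_zero] at h0
    rw [w.v_eq_of_dir_eq hrun hs, h0, sub_smul, sub_smul, zero_smul]
    abel
  have hturn : ∀ s ∈ Set.Icc a b, w.turnAt (i + s) ≠ 0 → 0 < C.turnsIn {w.v i + s • w.dir i} :=
    fun s hs ht => Nat.pos_of_ne_zero fun h0 =>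
      ht ((C.turnsIn_singleton_eq_zero_iff.mp h0) j _ (hv s hs))
  refine ⟨w.dir i, w.step i, a, b, ha, hb, fun s hs => hv s hs ▸ C.mem j _, ?_, ?_⟩
  · exact hturn a ⟨le_rfl, by omega⟩ hta
  · exact hturn b ⟨by omega, le_rfl⟩ htb

variable {C}

theorem TurnsAround.neg {p d : Pixel} (h : C.TurnsAround p d) : C.TurnsAround p (-d) := by
  obtain ⟨a, b, ha, hb, hP, hta, htb⟩ := h
  refine ⟨-b, -a, by omega, by omega, fun s hs => ?_, by simpa using htb, by simpa using hta⟩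
  simpa using hP (-s) ⟨by linarith [hs.2], by linarith [hs.1]⟩

theorem TurnsAround.exists_left_right {p : Pixel} (h : C.TurnsAround p (1, 0)) :
    (∃ q ∈ hStrip P p, q.1 < p.1 ∧ 0 < C.turnsIn {q}) ∧
      (∃ q ∈ hStrip P p, p.1 < q.1 ∧ 0 < C.turnsIn {q}) := by
  obtain ⟨a, b, ha, hb, hP, hta, htb⟩ := h
  have hstrip : ∀ c ∈ Set.Icc a b, p + c • ((1, 0) : Pixel) ∈ hStrip P p := by
    refine fun c ⟨hac, hcb⟩ => ⟨by simp, fun x hx₁ hx₂ => ?_⟩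
    simp only [Prod.fst_add, Prod.smul_fst, smul_eq_mul, mul_one] at hx₁ hx₂
    convert hP (x - p.1) ⟨by omega, by omega⟩ using 1
    ext <;> simp
  exact ⟨⟨_, hstrip a ⟨le_rfl, by omega⟩, by simpa using ha, hta⟩,
    ⟨_, hstrip b ⟨by omega, le_rfl⟩, by simpa using hb, htb⟩⟩

theorem TurnsAround.exists_below_above {p : Pixel} (h : C.TurnsAround p (0, 1)) :
    (∃ q ∈ vStrip P p, q.2 < p.2 ∧ 0 < C.turnsIn {q}) ∧
      (∃ q ∈ vStrip P p, p.2 < q.2 ∧ 0 < C.turnsIn {q}) := by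
  obtain ⟨a, b, ha, hb, hP, hta, htb⟩ := h
  have hstrip : ∀ c ∈ Set.Icc a b, p + c • ((0, 1) : Pixel) ∈ vStrip P p := by
    refine fun c ⟨hac, hcb⟩ => ⟨by simp, fun y hy₁ hy₂ => ?_⟩
    simp only [Prod.snd_add, Prod.smul_snd, smul_eq_mul, mul_one] at hy₁ hy₂
    convert hP (y - p.2) ⟨by omega, by omega⟩ using 1
    ext <;> simp
  exact ⟨⟨_, hstrip a ⟨le_rfl, by omega⟩, by simpa using ha, hta⟩,
    ⟨_, hstrip b ⟨by omega, le_rfl⟩, by simpa using hb, htb⟩⟩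

end CycleCover

/-- if a cycle cover makes no turn at a pixel `p`, then it makes a turn strictly
to the left and strictly to the right of `p` on the horizontal full strip through `p`, or a
turn strictly below and strictly above `p` on the vertical full strip through `p`. -/
theorem no_turn_guard (P : Set Pixel) (p : Pixel) (hp : p ∈ P) (C : CycleCover P)
    (h : C.turnsIn {p} = 0) :
    ((∃ q ∈ hStrip P p, q.1 < p.1 ∧ 0 < C.turnsIn {q}) ∧
      (∃ q ∈ hStrip P p, p.1 < q.1 ∧ 0 < C.turnsIn {q})) ∨
    ((∃ q ∈ vStrip P p, q.2 < p.2 ∧ 0 < C.turnsIn {q}) ∧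
      (∃ q ∈ vStrip P p, p.2 < q.2 ∧ 0 < C.turnsIn {q})) := by
  obtain ⟨d, hd, hturns⟩ := C.exists_turnsAround hp h
  rcases hd with rfl | rfl | rfl | rfl
  · exact .inl hturns.exists_left_right
  · exact .inl (hturns.neg : C.TurnsAround p (-(-1, 0))).exists_left_right
  · exact .inr hturns.exists_below_above
  · exact .inr (hturns.neg : C.TurnsAround p (-(0, -1))).exists_below_above
end

section
/- Every closed walk in a 2-dimensional grid graph that visits at least two distinct pixels makes at least four 90°-turns (where a U-turn counts as two 90°-turns). -/
/-!
Project the walk onto a coordinate axis along which it moves. The projected steps lie in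
`{-1, 0, 1}` and sum to zero, so both `1` and `-1` occur. Going around the cycle, the property
"the step is `+1`" switches on and off at least once each, and so does "the step is `-1`". Every
switch happens at a turn, and two switches at the same vertex happen only at a U-turn, which
counts twice.
-/

open Finset

namespace ZMod

variable {m : ℕ} [NeZero m]

theorem exists_not_sub_one_and {Q : ZMod m → Prop} {a b : ZMod m} (ha : Q a) (hb : ¬Q b) :
    ∃ i, ¬Q (i - 1) ∧ Q i := by
  by_contra! h
  have hQ : ∀ k : ℕ, Q (a - k) := by
    intro k
    induction k with
    | zero => simpa using ha
    | succ k ih =>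
      have hk := h (a - k)
      push_cast
      rw [← sub_sub]
      tauto
  have hb' := hQ (a - b).val
  rw [natCast_zmod_val, sub_sub_cancel] at hb'
  exact hb hb'

theorem exists_sub_one_and_not {Q : ZMod m → Prop} {a b : ZMod m} (ha : Q a) (hb : ¬Q b) :
    ∃ i, Q (i - 1) ∧ ¬Q i := by
  simpa using exists_not_sub_one_and (Q := fun i => ¬Q i) hb (not_not.2 ha)

theorem two_le_card_not_iff_sub_one {Q : ZMod m → Prop} [DecidablePred Q] {a b : ZMod m}
    (ha : Q a) (hb : ¬Q b) : 2 ≤ #{i | ¬(Q (i - 1) ↔ Q i)} := by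
  obtain ⟨i, hi⟩ := exists_not_sub_one_and ha hb
  obtain ⟨j, hj⟩ := exists_sub_one_and_not ha hb
  have hij : i ≠ j := fun h => hj.2 (h ▸ hi.2)
  calc 2 = #{i, j} := (card_pair hij).symm
    _ ≤ _ := card_le_card <| by
      intro k
      simp only [mem_insert, mem_singleton, mem_filter, mem_univ, true_and]
      rintro (rfl | rfl) <;> tauto

end ZMod

theorem IsUnitStep.coord_mem {c : Pixel → ℤ} (hc : c = Prod.fst ∨ c = Prod.snd) {d : Pixel}
    (hd : IsUnitStep d) : c d = 1 ∨ c d = 0 ∨ c d = -1 := by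
  rcases hc with rfl | rfl <;> rcases hd with rfl | rfl | rfl | rfl <;> simp

namespace GridWalk

variable {n : ℕ}

theorem isUnitStep_dir (w : GridWalk n) (i : ZMod (n + 1)) : IsUnitStep (w.dir i) := w.step i

/-- Leaving the value `1` and entering `-1` in one step takes a U-turn. -/
theorem switch_one_add_switch_neg_one_le_turnCost {c : Pixel → ℤ}
    (hc : c = Prod.fst ∨ c = Prod.snd) {d e : Pixel} (hd : IsUnitStep d) (he : IsUnitStep e) :
    ((if ¬(c d = 1 ↔ c e = 1) then 1 else 0) + if ¬(c d = -1 ↔ c e = -1) then 1 else 0)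
      ≤ turnCost d e := by
  rcases hc with rfl | rfl <;> rcases hd with rfl | rfl | rfl | rfl <;>
    rcases he with rfl | rfl | rfl | rfl <;> decide

theorem card_switch_one_add_card_switch_neg_one_le_turns (w : GridWalk n) {c : Pixel → ℤ}
    (hc : c = Prod.fst ∨ c = Prod.snd) :
    #{i | ¬(c (w.dir (i - 1)) = 1 ↔ c (w.dir i) = 1)}
      + #{i | ¬(c (w.dir (i - 1)) = -1 ↔ c (w.dir i) = -1)} ≤ w.turns := by
  rw [card_filter, card_filter, ← sum_add_distrib]
  exact sum_le_sum fun i _ =>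
    switch_one_add_switch_neg_one_le_turnCost hc (w.isUnitStep_dir _) (w.isUnitStep_dir _)

theorem sum_dir (w : GridWalk n) : ∑ i, w.dir i = 0 := by
  simp only [dir, sum_sub_distrib, sub_eq_zero]
  exact Fintype.sum_equiv (Equiv.addRight 1) _ _ fun _ => rfl

theorem exists_coord_dir_eq_one_and_eq_neg_one (w : GridWalk n) :
    ∃ c : Pixel → ℤ, (c = Prod.fst ∨ c = Prod.snd) ∧
      (∃ a, c (w.dir a) = 1) ∧ ∃ b, c (w.dir b) = -1 := by
  obtain ⟨c, hc, h0⟩ :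
      ∃ c : Pixel → ℤ, (c = Prod.fst ∨ c = Prod.snd) ∧ c (w.dir 0) ≠ 0 := by
    rcases w.isUnitStep_dir 0 with h | h | h | h
    · exact ⟨Prod.fst, .inl rfl, by simp [h]⟩
    · exact ⟨Prod.fst, .inl rfl, by simp [h]⟩
    · exact ⟨Prod.snd, .inr rfl, by simp [h]⟩
    · exact ⟨Prod.snd, .inr rfl, by simp [h]⟩
  have hsum : ∑ i, c (w.dir i) = 0 := by
    rcases hc with rfl | rfl
    · rw [← Prod.fst_sum, sum_dir]; rfl
    · rw [← Prod.snd_sum, sum_dir]; rfl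
  obtain ⟨a, -, ha⟩ := exists_pos_of_sum_zero_of_exists_nonzero _ hsum ⟨0, mem_univ _, h0⟩
  obtain ⟨b, -, hb⟩ := exists_pos_of_sum_zero_of_exists_nonzero (fun i => -c (w.dir i))
    (by rw [sum_neg_distrib, hsum, neg_zero]) ⟨0, mem_univ _, neg_ne_zero.2 h0⟩
  have ha' := (w.isUnitStep_dir a).coord_mem hc
  have hb' := (w.isUnitStep_dir b).coord_mem hc
  exact ⟨c, hc, ⟨a, by omega⟩, ⟨b, by omega⟩⟩

end GridWalk

theorem four_turns_general (n : ℕ) (w : GridWalk n) :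
    4 ≤ w.turns := by
  obtain ⟨c, hc, ⟨a, ha⟩, ⟨b, hb⟩⟩ := w.exists_coord_dir_eq_one_and_eq_neg_one
  calc 4 = 2 + 2 := rfl
    _ ≤ _ := add_le_add
        (ZMod.two_le_card_not_iff_sub_one (Q := fun i => c (w.dir i) = 1) ha
          (b := b) (by simp [hb]))
        (ZMod.two_le_card_not_iff_sub_one (Q := fun i => c (w.dir i) = -1) hb
          (b := a) (by simp [ha]))
    _ ≤ w.turns := w.card_switch_one_add_card_switch_neg_one_le_turns hc

/-- every closed walk visiting at least two distinct pixels makes at least four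
90°-turns (U-turns counting as two). -/
theorem four_turns (n : ℕ) (w : GridWalk n) (h : ∃ i j, w.v i ≠ w.v j) :
    4 ≤ w.turns :=
  four_turns_general n w
end

section
/- In any closed walk in a 2-dimensional grid graph, the number of turns made on any fixed row (i.e., on pixels with a fixed y-coordinate), counting U-turns as two, is even. -/
/-!
Reduce modulo 2. A turn is odd exactly when one of its two steps is vertical and the other
horizontal, so the row-`y` turn count is congruent to the number of (step, endpoint) incidences
between vertical steps and row `y`. A vertical step meets row `y` in at most one endpoint, and it
does so exactly when it crosses one of the levels `y - 1/2`, `y + 1/2`. A closed walk crosses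
every level an even number of times.
-/

section CyclicSums

variable {G R : Type*} [AddGroup G] [Fintype G] [Semiring R]

theorem sum_mul_add_shift_eq (f g : G → R) (a : G) :
    ∑ i, f i * (g (i - a) + g i) = ∑ i, (f i + f (i + a)) * g i := by
  have hshift : ∑ i, f i * g (i - a) = ∑ i, f (i + a) * g i :=
    Fintype.sum_equiv (Equiv.subRight a) _ _ fun i => by simp
  simp only [mul_add, add_mul, Finset.sum_add_distrib, hshift, add_comm]

theorem sum_add_shift_eq_zero [CharP R 2] (f : G → R) (a : G) :
    ∑ i, (f i + f (i + a)) = 0 := by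
  have hshift : ∑ i, f (i + a) = ∑ i, f i :=
    Fintype.sum_equiv (Equiv.addRight a) _ _ fun _ => rfl
  rw [Finset.sum_add_distrib, hshift, CharTwo.add_self_eq_zero]

end CyclicSums

def vertInd (d : Pixel) : ZMod 2 := if d.1 = 0 then 1 else 0

def rowInd (y : ℤ) (p : Pixel) : ZMod 2 := if p.2 = y then 1 else 0

-- `belowInd y p + belowInd y q = 1` iff the segment `pq` crosses the level `y + 1/2`.
def belowInd (y : ℤ) (p : Pixel) : ZMod 2 := if p.2 ≤ y then 1 else 0

theorem GridWalk.turnCost_cast_zmod_two {d e : Pixel} (hd : IsUnitStep d) (he : IsUnitStep e) :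
    (GridWalk.turnCost d e : ZMod 2) = vertInd d + vertInd e := by
  unfold GridWalk.turnCost vertInd
  rcases hd with rfl | rfl | rfl | rfl <;> rcases he with rfl | rfl | rfl | rfl <;> decide

theorem GridWalk.turnAt_cast_zmod_two {n : ℕ} (w : GridWalk n) (i : ZMod (n + 1)) :
    (w.turnAt i : ZMod 2) = vertInd (w.dir (i - 1)) + vertInd (w.dir i) :=
  turnCost_cast_zmod_two (w.step _) (w.step _)

theorem rowInd_add_mul_vertInd {p q : Pixel} (h : IsUnitStep (q - p)) (y : ℤ) :
    (rowInd y p + rowInd y q) * vertInd (q - p) =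
      (belowInd y p + belowInd y q) + (belowInd (y - 1) p + belowInd (y - 1) q) := by
  obtain ⟨x, z⟩ := p
  obtain ⟨x', z'⟩ := q
  simp only [IsUnitStep, Prod.mk_sub_mk, Prod.mk.injEq] at h
  unfold rowInd belowInd vertInd
  rcases h with ⟨hx, hz⟩ | ⟨hx, hz⟩ | ⟨hx, hz⟩ | ⟨hx, hz⟩ <;>
    simp only [Prod.mk_sub_mk, hx] <;> split_ifs <;> first | rfl | decide | omega

/-- in any closed walk, the number of turns made on any fixed row
(U-turns counting as two) is even. -/
theorem row_turns_even (n : ℕ) (w : GridWalk n) (y : ℤ) :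
    Even (∑ i, if (w.v i).2 = y then w.turnAt i else 0) := by
  rw [even_iff_two_dvd, ← ZMod.natCast_eq_zero_iff]
  push_cast
  have hturn (i : ZMod (n + 1)) :
      (if (w.v i).2 = y then (w.turnAt i : ZMod 2) else 0) =
        rowInd y (w.v i) * (vertInd (w.dir (i - 1)) + vertInd (w.dir i)) := by
    rw [w.turnAt_cast_zmod_two, rowInd]
    split_ifs <;> ring
  calc ∑ i, (if (w.v i).2 = y then (w.turnAt i : ZMod 2) else 0)
      = ∑ i, (rowInd y (w.v i) + rowInd y (w.v (i + 1))) * vertInd (w.dir i) := by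
        simp only [hturn]
        exact sum_mul_add_shift_eq (fun i => rowInd y (w.v i)) (fun i => vertInd (w.dir i)) 1
    _ = ∑ i, ((belowInd y (w.v i) + belowInd y (w.v (i + 1))) +
          (belowInd (y - 1) (w.v i) + belowInd (y - 1) (w.v (i + 1)))) :=
        Finset.sum_congr rfl fun i _ => rowInd_add_mul_vertInd (w.step i) y
    _ = 0 := by
        rw [Finset.sum_add_distrib, sum_add_shift_eq_zero (fun i => belowInd y (w.v i)),
          sum_add_shift_eq_zero (fun i => belowInd (y - 1) (w.v i)), add_zero]
end
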